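/- arXiv:2005.01824 — 2 statements merged into one kernel-verified Lean document; each statement's English description precedes it below -/
import Mathlib

section
/- Let t, k be natural numbers with k ≥ t + 1 and k ≥ 3, let G be a finite connected P_t-free graph, and let h be a C_k-coloring of G. Then there exists a ∈ ZMod k such that for every vertex v of G there is an integer 0 ≤ j ≤ t − 2 with h(v) = a + j; that is, the image h(V(G)) is contained in a subpath of C_k with t − 1 vertices. -/
/-- The cycle `C_k` on vertex set `ZMod k`: distinct vertices `u, v` are adjacent
iff `u - v = 1` or `v - u = 1`. -/
def cycleZMod (k : ℕ) : SimpleGraph (ZMod k) where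
  Adj u v := u ≠ v ∧ (u - v = 1 ∨ v - u = 1)
  symm := by
    refine ⟨?_⟩
    intro u v h
    exact ⟨h.1.symm, h.2.symm⟩
  loopless := by
    refine ⟨?_⟩
    intro u h
    exact h.1 rfl

/-- A graph is `P_t`-free if it has no induced subgraph isomorphic to the path on `t`
vertices, i.e. there is no graph embedding of the path graph on `t` vertices into it. -/
def PFree {V : Type*} (t : ℕ) (G : SimpleGraph V) : Prop :=
  IsEmpty (SimpleGraph.pathGraph t ↪g G)

namespace CkProof

open SimpleGraph Walk

variable {V : Type*} {k : ℕ} {G : SimpleGraph V}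

lemma one_ne_neg_one (hk : 3 ≤ k) : (1 : ZMod k) ≠ -1 := by
  intro he
  have h2 : ((2 : ℕ) : ZMod k) = 0 := by
    push_cast
    linear_combination he
  rw [ZMod.natCast_eq_zero_iff] at h2
  have := Nat.le_of_dvd (by norm_num) h2
  omega

def sgn (h : G →g cycleZMod k) (u v : V) : ℤ :=
  if (h v - h u : ZMod k) = 1 then 1 else -1

lemma sgn_step (hk : 3 ≤ k) (h : G →g cycleZMod k) {u v : V} (e : G.Adj u v) :
    (h v : ZMod k) = h u + ((sgn h u v : ℤ) : ZMod k) := by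
  obtain ⟨hne, hor⟩ := h.map_adj e
  unfold sgn
  rcases hor with h1 | h1
  · rw [if_neg (fun hc => one_ne_neg_one hk (by linear_combination -hc - h1))]
    push_cast
    linear_combination -h1
  · rw [if_pos h1]
    push_cast
    linear_combination h1

lemma sgn_symm (hk : 3 ≤ k) (h : G →g cycleZMod k) {u v : V} (e : G.Adj u v) :
    sgn h v u = - sgn h u v := by
  obtain ⟨hne, hor⟩ := h.map_adj e
  unfold sgn
  rcases hor with h1 | h1
  · rw [if_pos h1, if_neg (fun hc => one_ne_neg_one hk (by linear_combination -hc - h1))]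
    norm_num
  · rw [if_neg (fun hc => one_ne_neg_one hk (by linear_combination -hc - h1)), if_pos h1]

def wsum (h : G →g cycleZMod k) : {u v : V} → G.Walk u v → ℤ
  | _, _, .nil => 0
  | _, _, @Walk.cons _ _ u x _ _ p => sgn h u x + wsum h p

@[simp] lemma wsum_nil (h : G →g cycleZMod k) {u : V} :
    wsum h (.nil : G.Walk u u) = 0 := rfl

@[simp] lemma wsum_cons (h : G →g cycleZMod k) {u x v : V} (e : G.Adj u x) (p : G.Walk x v) :
    wsum h (.cons e p) = sgn h u x + wsum h p := rfl

@[simp] lemma wsum_copy (h : G →g cycleZMod k) {u v u' v' : V} (p : G.Walk u v)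
    (hu : u = u') (hv : v = v') : wsum h (p.copy hu hv) = wsum h p := by
  subst hu; subst hv; rfl

lemma wsum_append (h : G →g cycleZMod k) {u v w : V} (p : G.Walk u v) (q : G.Walk v w) :
    wsum h (p.append q) = wsum h p + wsum h q := by
  induction p with
  | nil => simp
  | cons e p ih => simp [ih]; ring

lemma wsum_reverse (hk : 3 ≤ k) (h : G →g cycleZMod k) {u v : V} (p : G.Walk u v) :
    wsum h p.reverse = - wsum h p := by
  induction p with
  | nil => simp
  | cons e p ih =>
    simp [Walk.reverse_cons, wsum_append, ih, sgn_symm hk h e]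

lemma hom_walk (hk : 3 ≤ k) (h : G →g cycleZMod k) {u v : V} (p : G.Walk u v) :
    (h v : ZMod k) = h u + ((wsum h p : ℤ) : ZMod k) := by
  induction p with
  | nil => simp
  | cons e p ih =>
    rw [wsum_cons, Int.cast_add, ih, sgn_step hk h e]
    ring

lemma abs_wsum_le (h : G →g cycleZMod k) :
    ∀ {u v : V} (p : G.Walk u v), |wsum h p| ≤ (p.length : ℤ)
  | _, _, .nil => by simp
  | _, _, @Walk.cons _ _ a b c e p => by
    have ih := abs_wsum_le h p
    rw [wsum_cons, Walk.length_cons]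
    have hs : |sgn h a b| ≤ (1 : ℤ) := by unfold sgn; split <;> simp
    calc |sgn h a b + wsum h p| ≤ |sgn h a b| + |wsum h p| := abs_add_le _ _
      _ ≤ 1 + p.length := add_le_add hs ih
      _ ≤ _ := by push_cast; omega


def wtake : {u v : V} → (p : G.Walk u v) → (n : ℕ) → G.Walk u (p.getVert n)
  | _, _, p, 0 => Walk.nil.copy rfl (p.getVert_zero).symm
  | _, _, Walk.nil, _ + 1 => Walk.nil
  | _, _, Walk.cons e p, n + 1 => Walk.cons e (wtake p n)

def wdrop : {u v : V} → (p : G.Walk u v) → (n : ℕ) → G.Walk (p.getVert n) v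
  | _, _, p, 0 => p.copy (p.getVert_zero).symm rfl
  | _, _, Walk.nil, _ + 1 => Walk.nil
  | _, _, Walk.cons e p, n + 1 => wdrop p n

lemma length_wtake : ∀ {u v : V} (p : G.Walk u v) (n : ℕ),
    (wtake p n).length = min n p.length
  | _, _, p, 0 => by simp [wtake]
  | _, _, Walk.nil, n + 1 => by simp [wtake]
  | _, _, Walk.cons e p, n + 1 => by
    have := length_wtake p n
    change (wtake p n).length + 1 = min (n + 1) (p.length + 1)
    omega

lemma length_wdrop : ∀ {u v : V} (p : G.Walk u v) (n : ℕ),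
    (wdrop p n).length = p.length - n
  | _, _, p, 0 => by simp [wdrop]
  | _, _, Walk.nil, n + 1 => by simp [wdrop]
  | _, _, Walk.cons e p, n + 1 => by
    simp [wdrop, length_wdrop p n]

lemma getVert_wdrop : ∀ {u v : V} (p : G.Walk u v) (n i : ℕ),
    (wdrop p n).getVert i = p.getVert (n + i)
  | _, _, p, 0, i => by simp [wdrop]
  | _, _, Walk.nil, n + 1, i => by
    rw [Walk.getVert_of_length_le _ (by rw [length_wdrop]; simp), Walk.getVert_of_length_le _ (by simp)]
  | _, _, Walk.cons e p, n + 1, i => by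
    have hni : n + 1 + i = (n + i) + 1 := by omega
    have h1 : (wdrop (Walk.cons e p) (n + 1)).getVert i = (wdrop p n).getVert i := rfl
    have h2 : (Walk.cons e p).getVert (n + 1 + i) = p.getVert (n + i) := by
      rw [congrArg (fun N => (Walk.cons e p).getVert N) hni, Walk.getVert_cons_succ]
    rw [h1, h2]
    exact getVert_wdrop p n i

lemma wsum_take_drop (h : G →g cycleZMod k) :
    ∀ {u v : V} (p : G.Walk u v) (n : ℕ),
    wsum h p = wsum h (wtake p n) + wsum h (wdrop p n)
  | _, _, p, 0 => by simp [wtake, wdrop]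
  | _, _, Walk.nil, n + 1 => by simp [wtake, wdrop]
  | _, _, Walk.cons e p, n + 1 => by
    simp [wtake, wdrop, wsum_cons]
    rw [wsum_take_drop h p n]
    ring

lemma wdrop_zero {u v : V} (p : G.Walk u v) :
    wdrop p 0 = p.copy (p.getVert_zero).symm rfl := by cases p <;> rfl

lemma wdrop_copy {u v u' v' : V} (p : G.Walk u v) (hu : u = u') (hv : v = v') (n : ℕ) :
    wdrop (p.copy hu hv) n = (wdrop p n).copy (by subst hu; subst hv; rfl) hv := by
  subst hu; subst hv; simp [Walk.copy_rfl_rfl]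

lemma wsum_wdrop_nil (h : G →g cycleZMod k) {u : V} (m : ℕ) :
    wsum h (wdrop (.nil : G.Walk u u) m) = 0 := by
  cases m with
  | zero => rw [wdrop]; simp
  | succ m => rw [wdrop]; simp

lemma wsum_wdrop_wdrop (h : G →g cycleZMod k) :
    ∀ {u v : V} (p : G.Walk u v) (n m : ℕ),
    wsum h (wdrop (wdrop p n) m) = wsum h (wdrop p (n + m))
  | _, _, p, 0, m => by
    rw [wdrop_zero, wdrop_copy, wsum_copy]
    exact congrArg (fun N => wsum h (wdrop p N)) (Nat.zero_add m).symm
  | _, _, Walk.nil, n + 1, m => by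
    rw [show wdrop (Walk.nil : G.Walk _ _) (n + 1) = Walk.nil from rfl,
      wsum_wdrop_nil]
    exact wsum_wdrop_nil h m
  | _, _, Walk.cons e p, n + 1, m => by
    have hni : n + 1 + m = (n + m) + 1 := by omega
    have h1 : wsum h (wdrop (wdrop (Walk.cons e p) (n + 1)) m)
        = wsum h (wdrop (wdrop p n) m) := rfl
    have h2 : wsum h (wdrop (Walk.cons e p) (n + 1 + m)) = wsum h (wdrop p (n + m)) := by
      rw [congrArg (fun N => wsum h (wdrop (Walk.cons e p) N)) hni]
      rfl
    rw [h1, h2]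
    exact wsum_wdrop_wdrop h p n m



def embedding_of_walk (t : ℕ) {u v : V} (w : G.Walk u v)
    (hlen : t ≤ w.length + 1)
    (hinj : ∀ i j : ℕ, i < j → j ≤ t - 1 → w.getVert i ≠ w.getVert j)
    (hind : ∀ i j : ℕ, i + 2 ≤ j → j ≤ t - 1 → ¬ G.Adj (w.getVert i) (w.getVert j)) :
    SimpleGraph.pathGraph t ↪g G := by
  refine ⟨⟨fun i => w.getVert i.val, ?_⟩, ?_⟩
  · intro a b hab
    by_contra hne
    have hne' : a.val ≠ b.val := fun hc => hne (Fin.ext hc)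
    have ha := a.isLt
    have hb := b.isLt
    rcases Nat.lt_or_ge a.val b.val with hl | hge
    · exact hinj a.val b.val hl (by omega) hab
    · exact hinj b.val a.val (by omega) (by omega) hab.symm
  · intro a b
    have ha := a.isLt
    have hb := b.isLt
    show G.Adj (w.getVert a.val) (w.getVert b.val) ↔ (SimpleGraph.pathGraph t).Adj a b
    rw [SimpleGraph.pathGraph_adj]
    constructor
    · intro hadj
      rcases Nat.lt_trichotomy a.val b.val with hl | he | hl
      · rcases Nat.lt_or_ge (a.val + 1) b.val with h2 | h2
        · exact absurd hadj (hind a.val b.val (by omega) (by omega))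
        · omega
      · exfalso
        have : w.getVert a.val = w.getVert b.val := by rw [he]
        rw [this] at hadj
        exact G.loopless.irrefl _ hadj
      · rcases Nat.lt_or_ge (b.val + 1) a.val with h2 | h2
        · exact absurd hadj.symm (hind b.val a.val (by omega) (by omega))
        · omega
    · intro hor
      rcases hor with h1 | h1
      · have hi : a.val < w.length := by omega
        have := w.adj_getVert_succ hi
        rwa [show a.val + 1 = b.val from h1] at this
      · have hi : b.val < w.length := by omega
        have := w.adj_getVert_succ hi
        rw [show b.val + 1 = a.val from h1] at this
        exact this.symm

lemma closed_wsum_eq_zero {t : ℕ} (hk : 3 ≤ k) (htk : t + 1 ≤ k)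
    (hfree : PFree t G) (h : G →g cycleZMod k) :
    ∀ (n : ℕ) {v : V} (w : G.Walk v v), w.length = n → wsum h w = 0 := by
  intro n
  induction n using Nat.strong_induction_on with
  | _ n ih =>
    intro v w hw
    have hdvd : (k : ℤ) ∣ wsum h w := by
      have h0 := hom_walk hk h w
      have h1 : ((wsum h w : ℤ) : ZMod k) = 0 := by linear_combination -h0
      exact (ZMod.intCast_zmod_eq_zero_iff_dvd _ k).mp h1
    by_cases hsmall : n ≤ t
    · refine Int.eq_zero_of_abs_lt_dvd hdvd ?_
      have habs := abs_wsum_le h w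
      rw [hw] at habs
      have hnk : (n : ℤ) < (k : ℤ) := by exact_mod_cast (by omega : n < k)
      omega
    push_neg at hsmall
    by_cases hrep : ∃ i j : ℕ, i < j ∧ j ≤ n ∧ j - i < n ∧ w.getVert i = w.getVert j
    · obtain ⟨i, j, hij, hjn, hjilt, heq⟩ := hrep
      have hmid : (wdrop w i).getVert (j - i) = w.getVert i := by
        rw [getVert_wdrop, Nat.add_sub_cancel' hij.le]
        exact heq.symm
      have hz1 : wsum h ((wtake (wdrop w i) (j - i)).copy rfl hmid) = 0 :=
        ih (j - i) (by omega) _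
          (by rw [Walk.length_copy, length_wtake, length_wdrop, hw]; omega)
      have hz2 : wsum h ((wtake w i).append ((wdrop w j).copy heq.symm rfl)) = 0 :=
        ih (i + (n - j)) (by omega) _
          (by rw [Walk.length_append, Walk.length_copy, length_wtake, length_wdrop, hw]; omega)
      have e1 := wsum_take_drop h w i
      have e2 := wsum_take_drop h (wdrop w i) (j - i)
      have e3 : wsum h (wdrop (wdrop w i) (j - i)) = wsum h (wdrop w j) :=
        (wsum_wdrop_wdrop h w i (j - i)).trans
          (congrArg (fun N => wsum h (wdrop w N)) (Nat.add_sub_cancel' hij.le))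
      rw [wsum_copy] at hz1
      rw [wsum_append, wsum_copy] at hz2
      linarith
    by_cases hch : ∃ i j : ℕ, i + 2 ≤ j ∧ j ≤ n ∧ j - i ≤ n - 2 ∧
        G.Adj (w.getVert i) (w.getVert j)
    · obtain ⟨i, j, hij, hjn, hjd, e⟩ := hch
      have hmid : (wdrop w i).getVert (j - i) = w.getVert j := by
        rw [getVert_wdrop, Nat.add_sub_cancel' (by omega : i ≤ j)]
      have hz1 : wsum h (Walk.cons e.symm ((wtake (wdrop w i) (j - i)).copy rfl hmid)) = 0 :=
        ih (j - i + 1) (by omega) _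
          (by rw [Walk.length_cons, Walk.length_copy, length_wtake, length_wdrop, hw]; omega)
      have hz2 : wsum h ((wtake w i).append (Walk.cons e (wdrop w j))) = 0 :=
        ih (i + (1 + (n - j))) (by omega) _
          (by rw [Walk.length_append, length_wtake, Walk.length_cons, length_wdrop, hw]; omega)
      have e1 := wsum_take_drop h w i
      have e2 := wsum_take_drop h (wdrop w i) (j - i)
      have e3 : wsum h (wdrop (wdrop w i) (j - i)) = wsum h (wdrop w j) :=
        (wsum_wdrop_wdrop h w i (j - i)).trans
          (congrArg (fun N => wsum h (wdrop w N)) (Nat.add_sub_cancel' (by omega : i ≤ j)))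
      have es := sgn_symm hk h e
      rw [wsum_cons, wsum_copy] at hz1
      rw [wsum_append, wsum_cons] at hz2
      linarith
    · exfalso
      refine hfree.false (embedding_of_walk t w (by omega) ?_ ?_)
      · intro i j hij hjt heq
        exact hrep ⟨i, j, hij, by omega, by omega, heq⟩
      · intro i j hij hjt hadj
        exact hch ⟨i, j, hij, by omega, by omega, hadj⟩

end CkProof

open CkProof in
/-- If `k ≥ t + 1`, `k ≥ 3`, `G` is a finite connected `P_t`-free graph and `h` is a
`C_k`-coloring of `G`, then the image of `h` is contained in a subpath of `C_k` with
`t - 1` vertices. -/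
theorem stmt3 {V : Type*} [Fintype V] (t k : ℕ) (htk : t + 1 ≤ k) (hk : 3 ≤ k)
    (G : SimpleGraph V) (hconn : G.Connected) (hfree : PFree t G)
    (h : G →g cycleZMod k) :
    ∃ a : ZMod k, ∀ v : V, ∃ j : ℕ, j ≤ t - 2 ∧ h v = a + (j : ZMod k) := by
  classical
  obtain ⟨v₀⟩ := hconn.nonempty
  by_cases ht1 : t ≤ 1
  · exfalso
    refine hfree.false ⟨⟨fun _ => v₀, ?_⟩, ?_⟩
    · intro a b _
      have ha := a.isLt
      have hb := b.isLt
      exact Fin.ext (by omega)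
    · intro a b
      have ha := a.isLt
      have hb := b.isLt
      show G.Adj v₀ v₀ ↔ (SimpleGraph.pathGraph t).Adj a b
      rw [SimpleGraph.pathGraph_adj]
      constructor
      · intro hadj
        exact absurd hadj (G.loopless.irrefl v₀)
      · intro hor
        omega
  push_neg at ht1
  set g : V → ℤ := fun v => wsum h ((hconn.preconnected v₀ v).some) with hg
  have hwalk_eq : ∀ {a b : V} (p : G.Walk a b), wsum h p = g b - g a := by
    intro a b p
    have hcl := closed_wsum_eq_zero hk htk hfree h _
      ((((hconn.preconnected v₀ a).some.append p).append
        ((hconn.preconnected v₀ b).some.reverse))) rfl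
    rw [wsum_append, wsum_append, wsum_reverse hk] at hcl
    simp only [hg]
    linarith
  have hhv : ∀ v : V, (h v : ZMod k) = h v₀ + ((g v : ℤ) : ZMod k) := by
    intro v
    simpa only [hg] using hom_walk hk h ((hconn.preconnected v₀ v).some)
  obtain ⟨u₁, -, hmin⟩ := Finset.exists_min_image Finset.univ g ⟨v₀, Finset.mem_univ _⟩
  obtain ⟨u₂, -, hmax⟩ := Finset.exists_max_image Finset.univ g ⟨v₀, Finset.mem_univ _⟩
  have hdiff : g u₂ - g u₁ ≤ (t : ℤ) - 2 := by
    by_contra hcon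
    push_neg at hcon
    obtain ⟨w, hwl⟩ := (hconn.preconnected u₁ u₂).exists_walk_length_eq_dist
    have hws : wsum h w = g u₂ - g u₁ := hwalk_eq w
    have hlb : (t : ℤ) - 1 ≤ (w.length : ℤ) := by
      have h1 := abs_wsum_le h w
      rw [hws] at h1
      have h2 := le_abs_self (g u₂ - g u₁)
      omega
    have hlen : t - 1 ≤ w.length := by omega
    refine (hfree.false (embedding_of_walk t w (by omega) ?_ ?_)).elim
    · intro i j hij hjt heq
      have hd := SimpleGraph.dist_le ((wtake w i).append ((wdrop w j).copy heq.symm rfl))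
      rw [SimpleGraph.Walk.length_append, SimpleGraph.Walk.length_copy,
        length_wtake, length_wdrop, hwl] at hd
      omega
    · intro i j hij hjt hadj
      have hd := SimpleGraph.dist_le
        ((wtake w i).append (SimpleGraph.Walk.cons hadj (wdrop w j)))
      rw [SimpleGraph.Walk.length_append, SimpleGraph.Walk.length_cons,
        length_wtake, length_wdrop, hwl] at hd
      omega
  refine ⟨h v₀ + ((g u₁ : ℤ) : ZMod k), fun v => ?_⟩
  have hvmin := hmin v (Finset.mem_univ v)
  have hvmax := hmax v (Finset.mem_univ v)
  refine ⟨(g v - g u₁).toNat, ?_, ?_⟩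
  · rw [Int.toNat_le]
    have hcast : ((t - 2 : ℕ) : ℤ) = (t : ℤ) - 2 := by omega
    omega
  · have hnn : (0 : ℤ) ≤ g v - g u₁ := by linarith
    have htn : (((g v - g u₁).toNat : ℕ) : ℤ) = g v - g u₁ := Int.toNat_of_nonneg hnn
    have hcast : (((g v - g u₁).toNat : ℕ) : ZMod k) = ((g v - g u₁ : ℤ) : ZMod k) := by
      conv_rhs => rw [← htn]
      rw [Int.cast_natCast]
    rw [hhv v, hcast]
    push_cast
    ring
end

section
/- For every integer s ≥ 2, there is no c ∈ ZMod (2s+1) such that for each i ∈ {1, 2, 3} there exists an integer j with 0 ≤ j ≤ s and c = i + s − 2j in ZMod (2s+1). Equivalently, setting R(i) = { i + s − 2j : 0 ≤ j ≤ s } ⊆ ZMod (2s+1), the intersection R(1) ∩ R(2) ∩ R(3) is empty. -/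
lemma stmt12_key (s a b : ℕ) (hs : 2 ≤ s) (ha : a ≤ s) (hb : b ≤ s)
    (h : ((2 * s + 1 : ℕ) : ℤ) ∣ (2 * (b : ℤ) - 2 * a - 1)) : a = s ∧ b = 0 := by
  obtain ⟨k, hk⟩ := h
  push_cast at hk
  have ha' : (a : ℤ) ≤ s := by exact_mod_cast ha
  have hb' : (b : ℤ) ≤ s := by exact_mod_cast hb
  have ha0 : (0 : ℤ) ≤ a := Int.natCast_nonneg a
  have hb0 : (0 : ℤ) ≤ b := Int.natCast_nonneg b
  have hk0 : k = -1 := by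
    rcases lt_trichotomy k 0 with h1 | h1 | h1
    · by_contra hne
      have h2 : k ≤ -2 := by omega
      nlinarith
    · exfalso
      subst h1
      simp at hk
      omega
    · exfalso
      have h2 : 1 ≤ k := h1
      nlinarith
  subst hk0
  have : 2 * (b : ℤ) - 2 * a - 1 = -(2 * s + 1) := by linarith [hk]
  omega

/-- For every `s ≥ 2` there is no `c ∈ ZMod (2s+1)` such that for each `i ∈ {1, 2, 3}`
there is an integer `0 ≤ j ≤ s` with `c = i + s - 2j` in `ZMod (2s+1)`; i.e.
`R(1) ∩ R(2) ∩ R(3) = ∅` where `R(i) = {i + s - 2j : 0 ≤ j ≤ s}`. -/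
theorem stmt12 (s : ℕ) (hs : 2 ≤ s) :
    ¬ ∃ c : ZMod (2 * s + 1), ∀ i ∈ ({1, 2, 3} : Set (ZMod (2 * s + 1))),
      ∃ j : ℕ, j ≤ s ∧
        c = i + (s : ZMod (2 * s + 1)) - 2 * (j : ZMod (2 * s + 1)) := by
  rintro ⟨c, h⟩
  haveI : NeZero (2 * s + 1) := ⟨by omega⟩
  obtain ⟨j1, hj1, e1⟩ := h 1 (by simp)
  obtain ⟨j2, hj2, e2⟩ := h 2 (by simp)
  obtain ⟨j3, hj3, e3⟩ := h 3 (by simp)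
  have h12 : ((2 * (j2 : ℤ) - 2 * j1 - 1 : ℤ) : ZMod (2 * s + 1)) = 0 := by
    push_cast
    linear_combination e2 - e1
  have h23 : ((2 * (j3 : ℤ) - 2 * j2 - 1 : ℤ) : ZMod (2 * s + 1)) = 0 := by
    push_cast
    linear_combination e3 - e2
  have d12 := (ZMod.intCast_zmod_eq_zero_iff_dvd _ _).mp h12
  have d23 := (ZMod.intCast_zmod_eq_zero_iff_dvd _ _).mp h23
  obtain ⟨hA, hB⟩ := stmt12_key s j1 j2 hs hj1 hj2 d12
  obtain ⟨hC, hD⟩ := stmt12_key s j2 j3 hs hj2 hj3 d23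
  omega
end
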